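/- arXiv:2201.13250 — 4 statements merged into one kernel-verified Lean document; each statement's English description precedes it below -/
import Mathlib

section
/- Let s ∈ ℕ, let V be a finite-dimensional normed complex vector space, let L : (ℂ²)^{⊗s} →ₗ[ℂ] V be a linear map, and let f_j : ℝ → ℂ (j = 1,…,s) each be differentiable at θ₀ ∈ ℝ. Define linear maps B_j : ℂ² →ₗ[ℂ] ℂ² by B_j(e₀) = e₀ + f_j(θ₀)·e₁ and B_j(e₁) = f_j'(θ₀)·e₁. Then the function θ ↦ L(⊗_{j=1}^s (e₀ + f_j(θ)·e₁)) is differentiable at θ₀ and its derivative equals L((B_1 ⊗ ⋯ ⊗ B_s)(w_s)). Equivalently, the derivative equals Σ_{j=1}^s f_j'(θ₀) · L(v_1 ⊗ ⋯ ⊗ v_s) where v_j = e₁ and v_l = e₀ + f_l(θ₀)·e₁ for l ≠ j. (This is the single-diagram product rule for differentiating an arbitrary algebraic ZX diagram, packaged by a W spider.) -/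
open scoped TensorProduct

noncomputable section

/-- `ℂ²` with standard basis vectors. -/
abbrev C2 : Type := ℂ × ℂ

def e0 : C2 := (1, 0)
def e1 : C2 := (0, 1)

/-- The unnormalized `s`-legged W state `w_s = ∑_j e₀ ⊗ ⋯ ⊗ e₁ ⊗ ⋯ ⊗ e₀`
(with `e₁` in the `j`-th factor). -/
def wState (s : ℕ) : ⨂[ℂ] _ : Fin s, C2 :=
  ∑ j : Fin s, ⨂ₜ[ℂ] l, (if l = j then e1 else e0)

/-!
`m ↦ L (⨂ₜ m)` is multilinear on finite-dimensional spaces, hence continuous, so the Leibniz rule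
differentiates `θ ↦ L (⨂ₜ j, (e₀ + f j θ • e₁))` into `∑ j, L (⋯ ⊗ f' j • e₁ ⊗ ⋯)`, the other
factors evaluated at `θ₀`. Applying `⨂ B_j` to the `j`-th summand of the W state gives exactly
the `j`-th Leibniz term, since `B` sends `e₀` to the undifferentiated factor and `e₁` to `f' • e₁`.
-/

open Function

theorem MultilinearMap.continuous_of_finiteDimensional {𝕜 ι : Type*} [NontriviallyNormedField 𝕜]
    [CompleteSpace 𝕜] [Fintype ι] {E : ι → Type*} [∀ i, NormedAddCommGroup (E i)]
    [∀ i, NormedSpace 𝕜 (E i)] [∀ i, FiniteDimensional 𝕜 (E i)] {F : Type*}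
    [NormedAddCommGroup F] [NormedSpace 𝕜 F] (f : MultilinearMap 𝕜 E F) : Continuous f := by
  classical
  let b := fun i => Module.finBasis 𝕜 (E i)
  have hexpand : ⇑f = fun m => ∑ r : ∀ i, Fin (Module.finrank 𝕜 (E i)),
      (∏ i, (b i).coord (r i) (m i)) • f fun i => b i (r i) := by
    ext m
    conv_lhs => rw [← funext fun i => (b i).sum_repr (m i)]
    simp only [f.map_sum, f.map_smul_univ, Module.Basis.coord_apply]
  rw [hexpand]
  refine continuous_finsetSum _ fun r _ => ?_
  refine (continuous_finsetProd _ fun i _ => ?_).smul continuous_const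
  exact ((b i).coord (r i)).continuous_of_finiteDimensional.comp (continuous_apply i)

theorem HasDerivAt.multilinear_comp {𝕜 ι : Type*} [NontriviallyNormedField 𝕜] [Fintype ι]
    [DecidableEq ι] {E : ι → Type*} [∀ i, NormedAddCommGroup (E i)] [∀ i, NormedSpace 𝕜 (E i)]
    {F : Type*} [NormedAddCommGroup F] [NormedSpace 𝕜 F] (f : ContinuousMultilinearMap 𝕜 E F)
    {g : ∀ i, 𝕜 → E i} {g' : ∀ i, E i} {x : 𝕜} (hg : ∀ i, HasDerivAt (g i) (g' i) x) :
    HasDerivAt (fun x => f fun i => g i x) (∑ i, f (update (fun j => g j x) i (g' i))) x := by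
  rw [← ContinuousMultilinearMap.linearDeriv_apply]
  exact (f.hasFDerivAt _).comp_hasDerivAt x (hasDerivAt_pi.2 hg)

theorem LinearMap.hasDerivAt_comp_tprod {ι : Type*} [Fintype ι] [DecidableEq ι]
    {E : ι → Type*} [∀ i, NormedAddCommGroup (E i)] [∀ i, NormedSpace ℂ (E i)]
    [∀ i, FiniteDimensional ℂ (E i)] {F : Type*} [NormedAddCommGroup F] [NormedSpace ℂ F]
    (L : (⨂[ℂ] i, E i) →ₗ[ℂ] F) {g : ∀ i, ℝ → E i} {g' : ∀ i, E i} {t : ℝ}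
    (hg : ∀ i, HasDerivAt (g i) (g' i) t) :
    HasDerivAt (fun t => L (⨂ₜ[ℂ] i, g i t))
      (∑ i, L (PiTensorProduct.tprod ℂ (update (fun j => g j t) i (g' i)))) t :=
  HasDerivAt.multilinear_comp
    ⟨(L.compMultilinearMap (PiTensorProduct.tprod ℂ)).restrictScalars ℝ,
      MultilinearMap.continuous_of_finiteDimensional _⟩ hg

theorem map_wState {s : ℕ} (B : Fin s → C2 →ₗ[ℂ] C2) :
    PiTensorProduct.map B (wState s) =
      ∑ j, PiTensorProduct.tprod ℂ (update (fun l => B l e0) j (B j e1)) := by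
  rw [wState, map_sum]
  refine Finset.sum_congr rfl fun j _ => ?_
  rw [PiTensorProduct.map_tprod]
  refine congrArg _ (funext fun l => ?_)
  by_cases hl : l = j <;> simp [hl]

theorem deriv_algebraic_zx_diagram_general (s : ℕ) (V : Type*) [NormedAddCommGroup V]
    [NormedSpace ℂ V]
    (L : (⨂[ℂ] _ : Fin s, C2) →ₗ[ℂ] V)
    (f : Fin s → ℝ → ℂ) (f' : Fin s → ℂ) (θ₀ : ℝ)
    (hf : ∀ j, HasDerivAt (f j) (f' j) θ₀)
    (B : Fin s → C2 →ₗ[ℂ] C2)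
    (hB0 : ∀ j, B j e0 = e0 + f j θ₀ • e1)
    (hB1 : ∀ j, B j e1 = f' j • e1) :
    HasDerivAt (fun θ : ℝ => L (⨂ₜ[ℂ] j, (e0 + f j θ • e1)))
        (L (PiTensorProduct.map B (wState s))) θ₀ ∧
      L (PiTensorProduct.map B (wState s)) =
        ∑ j : Fin s, f' j • L (⨂ₜ[ℂ] l, (if l = j then e1 else e0 + f l θ₀ • e1)) := by
  simp only [map_wState, hB0, hB1, map_sum]
  refine ⟨L.hasDerivAt_comp_tprod fun j => ((hf j).smul_const e1).const_add e0,
    Finset.sum_congr rfl fun j _ => ?_⟩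
  rw [MultilinearMap.map_update_smul, map_smul]
  congr 3
  exact funext (update_apply _ j e1)

/-- single-diagram product rule for differentiating an arbitrary
algebraic ZX diagram, packaged by a W spider. -/
theorem deriv_algebraic_zx_diagram (s : ℕ) (V : Type*) [NormedAddCommGroup V]
    [NormedSpace ℂ V] [FiniteDimensional ℂ V]
    (L : (⨂[ℂ] _ : Fin s, C2) →ₗ[ℂ] V)
    (f : Fin s → ℝ → ℂ) (f' : Fin s → ℂ) (θ₀ : ℝ)
    (hf : ∀ j, HasDerivAt (f j) (f' j) θ₀)
    (B : Fin s → C2 →ₗ[ℂ] C2)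
    (hB0 : ∀ j, B j e0 = e0 + f j θ₀ • e1)
    (hB1 : ∀ j, B j e1 = f' j • e1) :
    HasDerivAt (fun θ : ℝ => L (⨂ₜ[ℂ] j, (e0 + f j θ • e1)))
        (L (PiTensorProduct.map B (wState s))) θ₀ ∧
      L (PiTensorProduct.map B (wState s)) =
        ∑ j : Fin s, f' j • L (⨂ₜ[ℂ] l, (if l = j then e1 else e0 + f l θ₀ • e1)) :=
  deriv_algebraic_zx_diagram_general s V L f f' θ₀ hf B hB0 hB1
end
end

section
/- Let L : ℂ² ⊗ ℂ² →ₗ[ℂ] ℂ be a linear functional and define E : ℝ → ℂ by E(θ) = L((e₀ + exp(iθ)·e₁) ⊗ (e₀ + exp(−iθ)·e₁)). Then for every θ ∈ ℝ, E'(θ) = (1/2)·(E(θ + π/2) − E(θ − π/2)). (This is the two-term parameter-shift rule of Schuld et al., obtained as a special case of the diagrammatic differentiation of circuit expectations.) -/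
open scoped TensorProduct

noncomputable section

/-!
Expanding the tensor product and using `e^{iθ} e^{-iθ} = 1` gives `E θ = a + b e^{-iθ} + c e^{iθ}`,
a trigonometric polynomial with frequencies `-1, 0, 1`. The shift rule is linear in `E`, and for `e^{ikθ}` it reads
`ik e^{ikθ} = ½ (e^{ikπ/2} - e^{-ikπ/2}) e^{ikθ} = i sin(kπ/2) e^{ikθ}`, which holds exactly
when `sin (kπ/2) = k`, in particular for `k ∈ {-1, 0, 1}`.
-/

open Complex
open scoped Real

theorem TensorProduct.map_add_smul_tmul_add_smul {R M N P : Type*} [CommSemiring R]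
    [AddCommMonoid M] [AddCommMonoid N] [AddCommMonoid P] [Module R M] [Module R N] [Module R P]
    (L : M ⊗[R] N →ₗ[R] P) (u v : M) (w z : N) (x y : R) :
    L ((u + x • v) ⊗ₜ (w + y • z)) =
      L (u ⊗ₜ w) + y • L (u ⊗ₜ z) + x • L (v ⊗ₜ w) + (x * y) • L (v ⊗ₜ z) := by
  simp only [TensorProduct.add_tmul, TensorProduct.tmul_add, ← TensorProduct.smul_tmul',
    TensorProduct.tmul_smul, map_add, map_smul, smul_add, mul_smul, smul_comm y x]
  abel

def SatisfiesShiftRule (f : ℝ → ℂ) : Prop :=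
  ∀ θ : ℝ, HasDerivAt f ((1 / 2) * (f (θ + π / 2) - f (θ - π / 2))) θ

namespace SatisfiesShiftRule

theorem const (c : ℂ) : SatisfiesShiftRule fun _ => c := fun θ =>
  (hasDerivAt_const θ c).congr_deriv (by simp)

theorem add {f g : ℝ → ℂ} (hf : SatisfiesShiftRule f) (hg : SatisfiesShiftRule g) :
    SatisfiesShiftRule (f + g) := fun θ =>
  ((hf θ).add (hg θ)).congr_deriv (by simp only [Pi.add_apply]; ring)

theorem const_mul {f : ℝ → ℂ} (hf : SatisfiesShiftRule f) (c : ℂ) :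
    SatisfiesShiftRule fun t => c * f t := fun θ =>
  ((hf θ).const_mul c).congr_deriv (by ring)

theorem exp_mul_I {k : ℝ} (hk : Real.sin (k * π / 2) = k) :
    SatisfiesShiftRule fun t => exp (k * t * I) := fun θ => by
  have hderiv : HasDerivAt (fun t : ℝ => exp (k * t * I)) (k * I * exp (k * θ * I)) θ := by
    simpa [mul_comm, mul_left_comm] using
      (((hasDerivAt_id (θ : ℂ)).const_mul (k * I)).cexp).comp_ofReal
  have hrotate : ∀ s : ℝ, exp (k * ↑(θ + s) * I) =
      exp (k * θ * I) * (Real.cos (k * s) + Real.sin (k * s) * I) := by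
    intro s
    rw [ofReal_cos, ofReal_sin, ← Complex.exp_mul_I, ← exp_add]
    push_cast
    ring_nf
  refine hderiv.congr_deriv ?_
  dsimp only
  rw [sub_eq_add_neg θ, hrotate, hrotate, mul_neg, Real.cos_neg, Real.sin_neg,
    show k * (π / 2) = k * π / 2 by ring, hk]
  push_cast
  ring

end SatisfiesShiftRule

/-- the two-term parameter-shift rule of Schuld et al. -/
theorem parameter_shift_rule (L : C2 ⊗[ℂ] C2 →ₗ[ℂ] ℂ) (E : ℝ → ℂ)
    (hE : ∀ θ, E θ = L ((e0 + Complex.exp (Complex.I * (θ : ℂ)) • e1) ⊗ₜ[ℂ]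
      (e0 + Complex.exp (-(Complex.I * (θ : ℂ))) • e1)))
    (θ : ℝ) :
    deriv E θ = (1 / 2) * (E (θ + Real.pi / 2) - E (θ - Real.pi / 2)) := by
  have hfreq : E = (fun _ => L (e0 ⊗ₜ e0) + L (e1 ⊗ₜ e1)) +
      ((fun t : ℝ => L (e1 ⊗ₜ e0) * exp ((1 : ℝ) * t * I)) +
        fun t : ℝ => L (e0 ⊗ₜ e1) * exp ((-1 : ℝ) * t * I)) := by
    funext t
    rw [hE, TensorProduct.map_add_smul_tmul_add_smul, ← exp_add, add_neg_cancel, exp_zero,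
      one_smul, smul_eq_mul, smul_eq_mul]
    simp only [Pi.add_apply]
    push_cast
    ring_nf
  have hshift : SatisfiesShiftRule E := hfreq ▸
    (SatisfiesShiftRule.const _).add
      (((SatisfiesShiftRule.exp_mul_I (by simp)).const_mul _).add
        ((SatisfiesShiftRule.exp_mul_I (by simp [neg_div])).const_mul _))
  exact (hshift θ).deriv
end
end

section
/- Let k be a nonzero integer, let m, n ∈ ℕ, and let A be a complex (2^{2+n}) × (2^{2+m}) matrix. For α ∈ ℝ let r(α) = (1, e^{ikα})ᵀ and define the 2^n × 2^m matrix Q(α) = ((r(−α)ᵀ ⊗ r(−α)ᵀ) ⊗ I_{2^n}) · A · ((r(α) ⊗ r(α)) ⊗ I_{2^m}). Then (1/(2π)) · ∫_{−π}^{π} Q(α) dα = (⟨00| ⊗ I_{2^n}) A (|00⟩ ⊗ I_{2^m}) + (⟨11| ⊗ I_{2^n}) A (|11⟩ ⊗ I_{2^m}) + ((⟨01| + ⟨10|) ⊗ I_{2^n}) A ((|01⟩ + |10⟩) ⊗ I_{2^m}), where for x,y ∈ {0,1}, |xy⟩ = |x⟩ ⊗ |y⟩ and ⟨xy| is its transpose.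 -/
/-!
Writing `r(α) = |0⟩ + e^{ikα} |1⟩`, each entry of `Q(α)` is the trigonometric polynomial
`∑_{a,b} e^{ik(|b| - |a|)α} A_{a,b}` over two-bit labels `a, b`, where `|a|` is the Hamming weight.
Since `k ≠ 0`, averaging over a period kills exactly the terms with `|a| ≠ |b|`, and the surviving
terms, grouped by weight `0`, `2`, `1`, are the three summands on the right.
-/

open Matrix MeasureTheory
open scoped Kronecker

noncomputable section

/-- Standard basis kets of `ℂ²` as `2 × 1` column matrices. -/
def ket (x : Fin 2) : Matrix (Fin 2) (Fin 1) ℂ := fun i _ => if i = x then 1 else 0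

/-- The column `r(α) = (1, e^{ikα})ᵀ`. -/
def r (k : ℤ) (α : ℝ) : Matrix (Fin 2) (Fin 1) ℂ :=
  !![1; Complex.exp (Complex.I * (k : ℂ) * (α : ℂ))]

lemma kronecker_one_mul_mul_kronecker_one_apply {R ι κ o o' p q : Type*} [CommSemiring R]
    [Fintype ι] [Fintype κ] [Fintype p] [Fintype q] [DecidableEq p] [DecidableEq q]
    (u : Matrix ι o R) (A : Matrix (ι × p) (κ × q) R) (v : Matrix κ o' R)
    (i : o × p) (j : o' × q) :
    ((uᵀ ⊗ₖ (1 : Matrix p p R)) * A * (v ⊗ₖ (1 : Matrix q q R))) i j =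
      ∑ a, ∑ b, u a i.1 * A (a, i.2) (b, j.2) * v b j.1 := by
  simp only [mul_apply, kroneckerMap_apply, transpose_apply, Fintype.sum_prod_type, one_apply,
    mul_ite, ite_mul, mul_one, mul_zero, zero_mul, Finset.sum_ite_eq, Finset.sum_ite_eq',
    Finset.mem_univ, if_true, Finset.sum_mul]
  exact Finset.sum_comm

lemma integral_exp_I_int_mul (c : ℤ) :
    ∫ α in (-Real.pi)..Real.pi, Complex.exp (Complex.I * c * α) =
      if c = 0 then (2 * Real.pi : ℂ) else 0 := by
  split_ifs with hc
  · simp [hc, two_mul]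
  have hIc : Complex.I * c ≠ 0 := mul_ne_zero Complex.I_ne_zero (by exact_mod_cast hc)
  have hperiodic : Complex.exp (Complex.I * c * Real.pi) =
      Complex.exp (Complex.I * c * (-Real.pi : ℝ)) := by
    have hshift : Complex.I * c * Real.pi =
        Complex.I * c * (-Real.pi : ℝ) + c * (2 * Real.pi * Complex.I) := by
      push_cast
      ring
    rw [hshift, Complex.exp_add, Complex.exp_int_mul_two_pi_mul_I, mul_one]
  rw [integral_exp_mul_complex hIc, hperiodic, sub_self, zero_div]

lemma average_sum_exp_I_int_mul {ι : Type*} (s : Finset ι) (c : ι → ℤ) (C : ι → ℂ) :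
    (1 / (2 * Real.pi) : ℂ) *
        ∫ α in (-Real.pi)..Real.pi, ∑ t ∈ s, Complex.exp (Complex.I * c t * α) * C t =
      ∑ t ∈ s, if c t = 0 then C t else 0 := by
  have hint : ∀ t ∈ s, IntervalIntegrable (fun α : ℝ ↦ Complex.exp (Complex.I * c t * α) * C t)
      volume (-Real.pi) Real.pi := fun t _ ↦ (by fun_prop : Continuous _).intervalIntegrable _ _
  rw [intervalIntegral.integral_finsetSum hint, Finset.mul_sum]
  refine Finset.sum_congr rfl fun t _ => ?_
  have hπ : (Real.pi : ℂ) ≠ 0 := by exact_mod_cast Real.pi_ne_zero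
  rw [intervalIntegral.integral_mul_const, integral_exp_I_int_mul]
  split_ifs
  · field_simp
  · simp

def pairWeight (a : Fin 2 × Fin 2) : ℕ := a.1 + a.2

lemma r_apply (k : ℤ) (α : ℝ) (x : Fin 2) (c : Fin 1) :
    r k α x c = Complex.exp (Complex.I * k * α * x) := by
  fin_cases x <;> simp [r]

lemma r_kronecker_r_apply (k : ℤ) (α : ℝ) (a : Fin 2 × Fin 2) (c : Fin 1 × Fin 1) :
    (r k α ⊗ₖ r k α) a c = Complex.exp (Complex.I * (k * pairWeight a : ℤ) * α) := by
  rw [kroneckerMap_apply, r_apply, r_apply, ← Complex.exp_add, pairWeight]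
  push_cast
  ring_nf

lemma ket_pair_weight_projector_apply (a b : Fin 2 × Fin 2) (c c' : Fin 1 × Fin 1) :
    (ket 0 ⊗ₖ ket 0) a c * (ket 0 ⊗ₖ ket 0) b c' + (ket 1 ⊗ₖ ket 1) a c * (ket 1 ⊗ₖ ket 1) b c' +
        (ket 0 ⊗ₖ ket 1 + ket 1 ⊗ₖ ket 0) a c * (ket 0 ⊗ₖ ket 1 + ket 1 ⊗ₖ ket 0) b c' =
      if pairWeight a = pairWeight b then 1 else 0 := by
  obtain ⟨x, y⟩ := a
  obtain ⟨x', y'⟩ := b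
  fin_cases x <;> fin_cases y <;> fin_cases x' <;> fin_cases y' <;> simp [ket, pairWeight]

lemma kronecker_r_sandwich_apply {p q : Type*} [Fintype p] [Fintype q] [DecidableEq p]
    [DecidableEq q] (k : ℤ) (α : ℝ) (A : Matrix ((Fin 2 × Fin 2) × p) ((Fin 2 × Fin 2) × q) ℂ)
    (i : (Fin 1 × Fin 1) × p) (j : (Fin 1 × Fin 1) × q) :
    ((((r k (-α))ᵀ ⊗ₖ (r k (-α))ᵀ) ⊗ₖ (1 : Matrix p p ℂ)) * A *
        ((r k α ⊗ₖ r k α) ⊗ₖ (1 : Matrix q q ℂ))) i j =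
      ∑ ab : (Fin 2 × Fin 2) × (Fin 2 × Fin 2),
        Complex.exp (Complex.I * (k * (pairWeight ab.2 - pairWeight ab.1) : ℤ) * α) *
          A (ab.1, i.2) (ab.2, j.2) := by
  rw [kroneckerMap_transpose, kronecker_one_mul_mul_kronecker_one_apply, ← Finset.sum_product']
  refine Finset.sum_congr rfl fun ab _ => ?_
  rw [r_kronecker_r_apply, r_kronecker_r_apply, mul_right_comm, ← Complex.exp_add]
  push_cast
  ring_nf

lemma kronecker_ket_sandwich_apply {p q : Type*} [Fintype p] [Fintype q] [DecidableEq p]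
    [DecidableEq q] (A : Matrix ((Fin 2 × Fin 2) × p) ((Fin 2 × Fin 2) × q) ℂ)
    (i : (Fin 1 × Fin 1) × p) (j : (Fin 1 × Fin 1) × q) :
    (((ket 0 ⊗ₖ ket 0)ᵀ ⊗ₖ (1 : Matrix p p ℂ)) * A * ((ket 0 ⊗ₖ ket 0) ⊗ₖ (1 : Matrix q q ℂ)) +
        ((ket 1 ⊗ₖ ket 1)ᵀ ⊗ₖ (1 : Matrix p p ℂ)) * A * ((ket 1 ⊗ₖ ket 1) ⊗ₖ (1 : Matrix q q ℂ)) +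
        ((ket 0 ⊗ₖ ket 1 + ket 1 ⊗ₖ ket 0)ᵀ ⊗ₖ (1 : Matrix p p ℂ)) * A *
          ((ket 0 ⊗ₖ ket 1 + ket 1 ⊗ₖ ket 0) ⊗ₖ (1 : Matrix q q ℂ))) i j =
      ∑ ab : (Fin 2 × Fin 2) × (Fin 2 × Fin 2),
        if pairWeight ab.1 = pairWeight ab.2 then A (ab.1, i.2) (ab.2, j.2) else 0 := by
  simp only [Matrix.add_apply, kronecker_one_mul_mul_kronecker_one_apply, ← Finset.sum_add_distrib,
    ← Finset.sum_product']
  refine Finset.sum_congr rfl fun ab _ => ?_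
  rw [← boole_mul, ← ket_pair_weight_projector_apply ab.1 ab.2 i.1 j.1]
  simp only [Matrix.add_apply]
  ring

/-- integration over a parameter with two positive and two
negative occurrences (entrywise integration). -/
theorem integrate_two_occurrences (k : ℤ) (hk : k ≠ 0) (m n : ℕ)
    (A : Matrix ((Fin 2 × Fin 2) × Fin (2 ^ n)) ((Fin 2 × Fin 2) × Fin (2 ^ m)) ℂ) :
    ∀ (i : (Fin 1 × Fin 1) × Fin (2 ^ n)) (j : (Fin 1 × Fin 1) × Fin (2 ^ m)),
      (1 / (2 * Real.pi) : ℂ) *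
        (∫ α in (-Real.pi)..Real.pi,
          ((((r k (-α))ᵀ ⊗ₖ (r k (-α))ᵀ) ⊗ₖ (1 : Matrix (Fin (2 ^ n)) (Fin (2 ^ n)) ℂ)) * A *
            ((r k α ⊗ₖ r k α) ⊗ₖ (1 : Matrix (Fin (2 ^ m)) (Fin (2 ^ m)) ℂ))) i j) =
      (((ket 0 ⊗ₖ ket 0)ᵀ ⊗ₖ (1 : Matrix (Fin (2 ^ n)) (Fin (2 ^ n)) ℂ)) * A *
          ((ket 0 ⊗ₖ ket 0) ⊗ₖ (1 : Matrix (Fin (2 ^ m)) (Fin (2 ^ m)) ℂ)) +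
        ((ket 1 ⊗ₖ ket 1)ᵀ ⊗ₖ (1 : Matrix (Fin (2 ^ n)) (Fin (2 ^ n)) ℂ)) * A *
          ((ket 1 ⊗ₖ ket 1) ⊗ₖ (1 : Matrix (Fin (2 ^ m)) (Fin (2 ^ m)) ℂ)) +
        ((ket 0 ⊗ₖ ket 1 + ket 1 ⊗ₖ ket 0)ᵀ ⊗ₖ (1 : Matrix (Fin (2 ^ n)) (Fin (2 ^ n)) ℂ)) * A *
          ((ket 0 ⊗ₖ ket 1 + ket 1 ⊗ₖ ket 0) ⊗ₖ (1 : Matrix (Fin (2 ^ m)) (Fin (2 ^ m)) ℂ))) i j := by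
  intro i j
  simp only [kronecker_r_sandwich_apply, average_sum_exp_I_int_mul, kronecker_ket_sandwich_apply]
  refine Finset.sum_congr rfl fun ab _ => ?_
  simp [hk, sub_eq_zero, eq_comm]
end
end

section
/- Let L : ℂ² ⊗ ℂ² →ₗ[ℂ] ℂ be a linear functional and define G : ℝ → ℂ by G(θ) = L((e₀ + exp(iθ)·e₁) ⊗ (e₀ + exp(−iθ)·e₁)). Then (1/(2π)) · ∫_{−π}^{π} (G'(θ))² dθ = 2 · L(e₁ ⊗ e₀) · L(e₀ ⊗ e₁). (This computes, in a single closed form, the integral over one uniformly distributed parameter of the squared gradient of a circuit expectation; the two legs of L correspond to the positions of the ±θ spiders.) -/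
/-! Bilinearity and `e^{iθ} e^{-iθ} = 1` make `G` the trigonometric polynomial
`c + a e^{iθ} + b e^{-iθ}` with `a = L(e₁ ⊗ e₀)`, `b = L(e₀ ⊗ e₁)`. Then
`(G')² = 2ab - a² e^{2iθ} - b² e^{-2iθ}`, and the two non-constant modes integrate to zero
over a period, leaving `4π ab`. -/

open MeasureTheory
open scoped TensorProduct

noncomputable section

open Complex
open scoped Real

lemma cexp_mul_cexp_neg (z : ℂ) : exp z * exp (-z) = 1 := by
  rw [← exp_add, add_neg_cancel, exp_zero]

lemma hasDerivAt_cexp_mul_ofReal (c : ℂ) (θ : ℝ) :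
    HasDerivAt (fun θ : ℝ => exp (c * θ)) (c * exp (c * θ)) θ := by
  simpa [mul_comm] using (((hasDerivAt_id (θ : ℂ)).const_mul c).comp_ofReal).cexp

lemma integral_cexp_int_mul_I {n : ℤ} (hn : n ≠ 0) :
    ∫ θ in -π..π, exp (n * I * θ) = 0 := by
  have hnI : (n : ℂ) * I ≠ 0 := by simp [hn]
  have hperiod : exp (n * I * π) = exp (n * I * ↑(-π)) :=
    exp_eq_exp_iff_exists_int.2 ⟨n, by push_cast; ring⟩
  rw [integral_exp_mul_complex hnI, hperiod, sub_self, zero_div]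

lemma hasDerivAt_trigonometric (a b c : ℂ) (θ : ℝ) :
    HasDerivAt (fun θ : ℝ => c + a * exp (I * θ) + b * exp (-(I * θ)))
      (I * a * exp (I * θ) - I * b * exp (-(I * θ))) θ := by
  have hplus := (hasDerivAt_cexp_mul_ofReal I θ).const_mul a
  have hminus := (hasDerivAt_cexp_mul_ofReal (-I) θ).const_mul b
  simp only [neg_mul] at hminus
  exact (((hasDerivAt_const θ c).add hplus).add hminus).congr_deriv (by ring)

lemma integral_sq_trigonometric (a b : ℂ) :
    ∫ θ in -π..π, (I * a * exp (I * θ) - I * b * exp (-(I * θ))) ^ 2 = 4 * π * a * b := by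
  have hsq : ∀ θ : ℝ, (I * a * exp (I * θ) - I * b * exp (-(I * θ))) ^ 2 =
      2 * a * b - a ^ 2 * exp ((2 : ℤ) * I * θ) - b ^ 2 * exp ((-2 : ℤ) * I * θ) := by
    intro θ
    have hdouble : exp ((2 : ℤ) * I * θ) = exp (I * θ) ^ 2 := by
      rw [← exp_nat_mul]; push_cast; ring_nf
    have hneg : exp ((-2 : ℤ) * I * θ) = exp (-(I * θ)) ^ 2 := by
      rw [← exp_nat_mul]; push_cast; ring_nf
    rw [hdouble, hneg]
    linear_combination (a * exp (I * θ) - b * exp (-(I * θ))) ^ 2 * I_sq + 2 * a * b * cexp_mul_cexp_neg (I * θ)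
  simp only [hsq]
  rw [intervalIntegral.integral_sub, intervalIntegral.integral_sub]
  · simp only [intervalIntegral.integral_const_mul, integral_cexp_int_mul_I two_ne_zero,
      integral_cexp_int_mul_I (by norm_num : (-2 : ℤ) ≠ 0), intervalIntegral.integral_const,
      real_smul]
    push_cast
    ring
  all_goals exact (by fun_prop : Continuous _).intervalIntegrable _ _

lemma TensorProduct.apply_add_smul_tmul_add_smul {R M N P : Type*} [CommRing R]
    [AddCommGroup M] [AddCommGroup N] [AddCommGroup P] [Module R M] [Module R N] [Module R P]
    (L : M ⊗[R] N →ₗ[R] P) (u v : M) (w z : N) (x y : R) :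
    L ((u + x • v) ⊗ₜ (w + y • z)) =
      L (u ⊗ₜ w) + x • L (v ⊗ₜ w) + y • L (u ⊗ₜ z) + (x * y) • L (v ⊗ₜ z) := by
  simp only [TensorProduct.add_tmul, TensorProduct.tmul_add, ← TensorProduct.smul_tmul',
    TensorProduct.tmul_smul, map_add, map_smul, smul_add, smul_smul, mul_comm y x]
  abel

/-- integral over one uniformly distributed parameter of the
squared gradient of a circuit expectation, in closed form. -/
theorem integral_squared_gradient (L : C2 ⊗[ℂ] C2 →ₗ[ℂ] ℂ) (G : ℝ → ℂ)
    (hG : ∀ θ, G θ = L ((e0 + Complex.exp (Complex.I * (θ : ℂ)) • e1) ⊗ₜ[ℂ]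
      (e0 + Complex.exp (-(Complex.I * (θ : ℂ))) • e1))) :
    (1 / (2 * Real.pi) : ℂ) * (∫ θ in (-Real.pi)..Real.pi, (deriv G θ) ^ 2) =
      2 * L (e1 ⊗ₜ[ℂ] e0) * L (e0 ⊗ₜ[ℂ] e1) := by
  have hG_trig : G = fun θ : ℝ => (L (e0 ⊗ₜ e0) + L (e1 ⊗ₜ e1)) +
      L (e1 ⊗ₜ e0) * exp (I * θ) + L (e0 ⊗ₜ e1) * exp (-(I * θ)) := by
    funext θ
    rw [hG, TensorProduct.apply_add_smul_tmul_add_smul, cexp_mul_cexp_neg]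
    simp only [smul_eq_mul, one_mul]
    ring
  simp only [hG_trig, (hasDerivAt_trigonometric _ _ _ _).deriv, integral_sq_trigonometric]
  field_simp
  ring
end
end
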